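/- arXiv:1711.06344 — 7 statements merged into one kernel-verified Lean document; each statement's English description precedes it below -/
import Mathlib

section
/- Let M and N be vector spaces over a field of characteristic zero, and let B_H, B_K : M × M → N be bilinear maps that are skew-symmetric, i.e. B_H(x,y) = −B_H(y,x) and B_K(x,y) = −B_K(y,x) for all x, y ∈ M. Suppose h : ℕ → M is a sequence satisfying the Lenard–Magri recursion B_H(h_m, x) = B_K(h_{m+1}, x) for all m ∈ ℕ and all x ∈ M. Then B_H(h_m, h_n) = 0 and B_K(h_m, h_n) = 0 for all m, n ∈ ℕ. -/
/-!
Skew-symmetry of both brackets together with the recursion moves an index from the first to the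
second argument of `B_K`, so `B_K(h_m, h_n)` depends only on `m + n`. Being both symmetric and
skew in `(m, n)`, it vanishes in characteristic zero, and the recursion carries this over to `B_H`.
-/

namespace LenardMagri

variable {M N : Type*} [AddCommGroup N] {BH BK : M → M → N} {h : ℕ → M}

theorem bk_succ_left (hH : ∀ x y, BH x y = -BH y x) (hK : ∀ x y, BK x y = -BK y x)
    (hrec : ∀ m x, BH (h m) x = BK (h (m + 1)) x) (m n : ℕ) :
    BK (h (m + 1)) (h n) = BK (h m) (h (n + 1)) :=
  calc BK (h (m + 1)) (h n) = BH (h m) (h n) := (hrec m (h n)).symm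
    _ = -BH (h n) (h m) := hH _ _
    _ = -BK (h (n + 1)) (h m) := by rw [hrec n (h m)]
    _ = BK (h m) (h (n + 1)) := (hK _ _).symm

theorem bk_eq_bk_zero_add (hH : ∀ x y, BH x y = -BH y x) (hK : ∀ x y, BK x y = -BK y x)
    (hrec : ∀ m x, BH (h m) x = BK (h (m + 1)) x) (m n : ℕ) :
    BK (h m) (h n) = BK (h 0) (h (m + n)) := by
  induction m generalizing n with
  | zero => rw [Nat.zero_add]
  | succ m ih => rw [bk_succ_left hH hK hrec, ih, Nat.add_right_comm, Nat.add_assoc]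

theorem bk_eq_zero [IsAddTorsionFree N] (hH : ∀ x y, BH x y = -BH y x)
    (hK : ∀ x y, BK x y = -BK y x) (hrec : ∀ m x, BH (h m) x = BK (h (m + 1)) x) (m n : ℕ) :
    BK (h m) (h n) = 0 :=
  self_eq_neg.mp <| calc
    BK (h m) (h n) = BK (h 0) (h (n + m)) := by rw [bk_eq_bk_zero_add hH hK hrec, Nat.add_comm]
    _ = BK (h n) (h m) := (bk_eq_bk_zero_add hH hK hrec n m).symm
    _ = -BK (h m) (h n) := hK _ _

theorem bh_eq_zero [IsAddTorsionFree N] (hH : ∀ x y, BH x y = -BH y x)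
    (hK : ∀ x y, BK x y = -BK y x) (hrec : ∀ m x, BH (h m) x = BK (h (m + 1)) x) (m n : ℕ) :
    BH (h m) (h n) = 0 :=
  (hrec m (h n)).trans (bk_eq_zero hH hK hrec (m + 1) n)

end LenardMagri

/-- **Generalized Lenard–Magri scheme** (abstract core of Proposition 5.2).
If `BH`, `BK` are skew-symmetric bilinear maps and the sequence `h` satisfies the
Lenard–Magri recursion `BH (h m) x = BK (h (m+1)) x`, then all the `h n` are in
involution with respect to both brackets. -/
theorem stmt_0 {K M N : Type*} [Field K] [CharZero K]
    [AddCommGroup M] [Module K M] [AddCommGroup N] [Module K N]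
    (BH BK : M →ₗ[K] M →ₗ[K] N)
    (hH : ∀ x y : M, BH x y = - BH y x)
    (hK : ∀ x y : M, BK x y = - BK y x)
    (h : ℕ → M)
    (hrec : ∀ (m : ℕ) (x : M), BH (h m) x = BK (h (m + 1)) x) :
    ∀ m n : ℕ, BH (h m) (h n) = 0 ∧ BK (h m) (h n) = 0 := by
  have : IsAddTorsionFree N := .of_isTorsionFree K N
  exact fun m n =>
    ⟨LenardMagri.bh_eq_zero hH hK hrec m n, LenardMagri.bk_eq_zero hH hK hrec m n⟩
end

section
/- For every φ ∈ P, every i ∈ I, and every N ∈ ℕ such that pderiv (i,n) (D φ) = 0 for all n ≥ N, one has ∑_{n=0}^{N−1} (−1)^n D^n (pderiv (i,n) (D φ)) = 0. That is, the variational derivative of a total derivative vanishes: δ(∂φ)/δu_i = 0 for all i (Proposition 4.5(2), in the purely even case). -/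
/-!
The total derivative `D` and the partial derivatives satisfy the commutation relations
`[∂/∂u_i^{(0)}, D] = 0` and `[∂/∂u_i^{(n+1)}, D] = ∂/∂u_i^{(n)}`, as both sides are derivations
agreeing on the generators. Hence the `n`-th term `(-1)ⁿ Dⁿ ∂_n (Dφ)` of the variational
derivative of `Dφ` equals `cₙ - cₙ₋₁` with `cₙ = (-1)ⁿ Dⁿ⁺¹ ∂_n φ`, and the sum telescopes to
its last `c`. Since `φ` involves only finitely many variables, that last term vanishes once the
sum is extended far enough, and by hypothesis the extension adds only zero terms.
-/

open MvPolynomial Filter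

namespace MvPolynomial

theorem eventually_pderiv_eq_zero {R I : Type*} [CommSemiring R] (i : I)
    (p : MvPolynomial (I × ℕ) R) : ∀ᶠ n in atTop, pderiv (i, n) p = 0 := by
  refine eventually_atTop.2 ⟨(p.vars.image Prod.snd).sup id + 1, fun n hn => ?_⟩
  refine pderiv_eq_zero_of_notMem_vars fun hmem => ?_
  have : n ≤ (p.vars.image Prod.snd).sup id :=
    Finset.le_sup (f := id) (Finset.mem_image_of_mem Prod.snd hmem)
  omega

section TotalDerivative

variable {R I : Type*} [CommRing R]
  (D : Derivation R (MvPolynomial (I × ℕ) R) (MvPolynomial (I × ℕ) R))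
  (hD : ∀ (i : I) (n : ℕ), D (X (i, n)) = X (i, n + 1))
include hD

theorem pderiv_zero_comm (i : I) (p : MvPolynomial (I × ℕ) R) :
    pderiv (i, 0) (D p) = D (pderiv (i, 0) p) := by
  classical
  have hcomm : ⁅(pderiv (i, 0) : Derivation R _ _), D⁆ = 0 := by
    refine derivation_ext fun ⟨j, m⟩ => ?_
    rw [Derivation.commutator_apply, hD j m]
    simp only [pderiv_X, Pi.single_apply, Derivation.zero_apply, Prod.mk.injEq]
    split_ifs <;> simp_all
  simpa [Derivation.commutator_apply, sub_eq_zero] using congr($hcomm p)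

theorem pderiv_succ_comm (i : I) (n : ℕ) (p : MvPolynomial (I × ℕ) R) :
    pderiv (i, n + 1) (D p) = D (pderiv (i, n + 1) p) + pderiv (i, n) p := by
  classical
  have hcomm : ⁅(pderiv (i, n + 1) : Derivation R _ _), D⁆ = pderiv (i, n) := by
    refine derivation_ext fun ⟨j, m⟩ => ?_
    rw [Derivation.commutator_apply, hD j m]
    simp only [pderiv_X, Pi.single_apply, Prod.mk.injEq]
    split_ifs <;> simp_all
  rw [← hcomm, Derivation.commutator_apply, add_sub_cancel]

theorem sum_range_succ_neg_one_pow_smul_iterate_pderiv (i : I) (p : MvPolynomial (I × ℕ) R)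
    (K : ℕ) :
    ∑ n ∈ Finset.range (K + 1), ((-1 : R) ^ n) • (⇑D)^[n] (pderiv (i, n) (D p)) =
      ((-1 : R) ^ K) • (⇑D)^[K + 1] (pderiv (i, K) p) := by
  induction K with
  | zero => simp [pderiv_zero_comm D hD]
  | succ K ih =>
    rw [Finset.sum_range_succ, ih, pderiv_succ_comm D hD, iterate_map_add, smul_add,
      ← Function.iterate_succ_apply, pow_succ, mul_neg_one]
    simp only [neg_smul]
    abel

end TotalDerivative

end MvPolynomial

/-- Proposition 4.5(2), purely even case: the variational derivative of a total
derivative vanishes.  If `pderiv (i,n) (D φ) = 0` for all `n ≥ N`, then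
`∑_{n=0}^{N-1} (-1)^n Dⁿ (pderiv (i,n) (D φ)) = 0`, i.e. `δ(∂φ)/δu_i = 0`. -/
theorem stmt_2 {I : Type*}
    (D : Derivation ℂ (MvPolynomial (I × ℕ) ℂ) (MvPolynomial (I × ℕ) ℂ))
    (hD : ∀ (i : I) (n : ℕ), D (X (i, n)) = X (i, n + 1)) :
    ∀ (φ : MvPolynomial (I × ℕ) ℂ) (i : I) (N : ℕ),
      (∀ n : ℕ, N ≤ n → (pderiv (i, n)) (D φ) = 0) →
      ∑ n ∈ Finset.range N, ((-1 : ℂ) ^ n) • (⇑D)^[n] ((pderiv (i, n)) (D φ)) = 0 := by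
  intro φ i N hN
  obtain ⟨L, hNL, hL⟩ :=
    ((eventually_ge_atTop N).and (eventually_pderiv_eq_zero i φ)).exists
  calc ∑ n ∈ Finset.range N, ((-1 : ℂ) ^ n) • (⇑D)^[n] ((pderiv (i, n)) (D φ))
      = ∑ n ∈ Finset.range (L + 1), ((-1 : ℂ) ^ n) • (⇑D)^[n] ((pderiv (i, n)) (D φ)) := by
        refine Finset.sum_subset (Finset.range_subset_range.2 (by omega)) fun n _ hn => ?_
        rw [hN n (by simpa using hn), iterate_map_zero, smul_zero]
    _ = ((-1 : ℂ) ^ L) • (⇑D)^[L + 1] (pderiv (i, L) φ) :=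
        sum_range_succ_neg_one_pow_smul_iterate_pderiv D hD i φ L
    _ = 0 := by rw [hL, iterate_map_zero, smul_zero]
end

section
/- Let φ ∈ P, let s ⊆ I be a finite set, let r : I → P be a family with r i = 0 for i ∉ s, and let N ∈ ℕ be such that pderiv (i,n) φ = 0 for all i ∈ s and all n ≥ N. Then ∑_{i ∈ s} ∑_{n=0}^{N−1} D^n(r i) · pderiv (i,n) φ − ∑_{i ∈ s} (r i) · ( ∑_{n=0}^{N−1} (−1)^n D^n (pderiv (i,n) φ) ) lies in ∂P. In other words, modulo total derivatives, the directional derivative of ∫φ in the direction r is represented by the variational derivative: ∫ ∑_{i,n} ∂^n(r^i) ∂φ/∂u_i^{(n)} = ∫ ∑_i r^i δφ/δu_i (the integration-by-parts identity underlying Lemma 4.6, equations (4.9)–(4.10), in the purely even case). -/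
/-!
Moving one derivative at a time across a product with the Leibniz rule,
`D (Dⁿa · b) = Dⁿ⁺¹a · b + Dⁿa · D b`, shows `Dⁿa · b ≡ (-1)ⁿ a · Dⁿb` modulo the image of `D`;
the claim is the sum of these congruences over `i ∈ s` and `n < N`.
-/

open MvPolynomial

section IntegrationByParts

variable {R A : Type*} [CommRing R] [CommRing A] [Algebra R A] (D : Derivation R A A)

theorem Derivation.iterate_mul_sub_mul_iterate_mem_range (n : ℕ) (a b : A) :
    D^[n] a * b - ((-1 : R) ^ n) • (a * D^[n] b) ∈ LinearMap.range (D : A →ₗ[R] A) := by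
  induction n generalizing b with
  | zero => simp
  | succ n ih =>
    have step : D^[n + 1] a * b - ((-1 : R) ^ (n + 1)) • (a * D^[n + 1] b) =
        D (D^[n] a * b) - (D^[n] a * D b - ((-1 : R) ^ n) • (a * D^[n] (D b))) := by
      rw [D.leibniz, Function.iterate_succ_apply', Function.iterate_succ_apply, pow_succ,
        mul_neg_one, neg_smul, smul_eq_mul, smul_eq_mul]
      ring
    rw [step]
    exact Submodule.sub_mem _ (LinearMap.mem_range_self _ _) (ih (D b))

end IntegrationByParts

theorem stmt_3_general {I : Type*}
    (D : Derivation ℂ (MvPolynomial (I × ℕ) ℂ) (MvPolynomial (I × ℕ) ℂ))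
    (φ : MvPolynomial (I × ℕ) ℂ) (s : Finset I)
    (r : I → MvPolynomial (I × ℕ) ℂ)
    (N : ℕ) :
    (∑ i ∈ s, ∑ n ∈ Finset.range N, (⇑D)^[n] (r i) * (pderiv (i, n)) φ)
      - (∑ i ∈ s, r i *
          ∑ n ∈ Finset.range N, ((-1 : ℂ) ^ n) • (⇑D)^[n] ((pderiv (i, n)) φ))
      ∈ Set.range ⇑D := by
  have termwise :
      (∑ i ∈ s, ∑ n ∈ Finset.range N, (⇑D)^[n] (r i) * (pderiv (i, n)) φ)
        - (∑ i ∈ s, r i *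
            ∑ n ∈ Finset.range N, ((-1 : ℂ) ^ n) • (⇑D)^[n] ((pderiv (i, n)) φ)) =
      ∑ i ∈ s, ∑ n ∈ Finset.range N, ((⇑D)^[n] (r i) * pderiv (i, n) φ
        - ((-1 : ℂ) ^ n) • (r i * (⇑D)^[n] (pderiv (i, n) φ))) := by
    simp only [Finset.sum_sub_distrib, Finset.mul_sum, mul_smul_comm]
  rw [termwise]
  exact Submodule.sum_mem _ fun i _ => Submodule.sum_mem _ fun n _ =>
    D.iterate_mul_sub_mul_iterate_mem_range n (r i) (pderiv (i, n) φ)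

/-- The integration-by-parts identity underlying Lemma 4.6 (equations (4.9)–(4.10)),
purely even case: modulo total derivatives, the directional derivative of `∫φ` in the
direction `r` is represented by the variational derivative:
`∫ ∑_{i,n} ∂ⁿ(rⁱ) ∂φ/∂u_i^{(n)} = ∫ ∑_i rⁱ δφ/δu_i`. -/
theorem stmt_3 {I : Type*}
    (D : Derivation ℂ (MvPolynomial (I × ℕ) ℂ) (MvPolynomial (I × ℕ) ℂ))
    (hD : ∀ (i : I) (n : ℕ), D (X (i, n)) = X (i, n + 1))
    (φ : MvPolynomial (I × ℕ) ℂ) (s : Finset I)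
    (r : I → MvPolynomial (I × ℕ) ℂ)
    (hr : ∀ i ∉ s, r i = 0)
    (N : ℕ)
    (hN : ∀ i ∈ s, ∀ n : ℕ, N ≤ n → (pderiv (i, n)) φ = 0) :
    (∑ i ∈ s, ∑ n ∈ Finset.range N, (⇑D)^[n] (r i) * (pderiv (i, n)) φ)
      - (∑ i ∈ s, r i *
          ∑ n ∈ Finset.range N, ((-1 : ℂ) ^ n) • (⇑D)^[n] ((pderiv (i, n)) φ))
      ∈ Set.range ⇑D :=
  stmt_3_general D φ s r N
end

section
/- If G, G' ∈ P satisfy F·G − F·G' ∈ ∂P for every F ∈ P, then G = G'. Equivalently (in the language of local functionals): if ∫ F G = ∫ F G' for all F, then G = G'. (Lemma 4.12, the case of even generators.) -/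
open MvPolynomial

namespace Stmt4Aux

variable {I : Type*}

/-- shift a variable index one level up -/
def up (j : I × ℕ) : I × ℕ := (j.1, j.2 + 1)

lemma up_ne (j : I × ℕ) : up j ≠ j := by
  simp [up, Prod.ext_iff]

lemma up_inj : Function.Injective (up (I := I)) := by
  rintro ⟨a, m⟩ ⟨b, n⟩ h
  simpa [up, Prod.ext_iff] using h

variable (D : Derivation ℂ (MvPolynomial (I × ℕ) ℂ) (MvPolynomial (I × ℕ) ℂ))
variable (hD : ∀ (i : I) (n : ℕ), D (X (i, n)) = X (i, n + 1))

include hD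

lemma D_eq : D = mkDerivation ℂ (fun j : I × ℕ => X (up j)) := by
  apply derivation_ext
  intro i
  rw [mkDerivation_X]
  exact hD i.1 i.2

lemma D_monomial (s : (I × ℕ) →₀ ℕ) (r : ℂ) :
    D (monomial s r) =
      ∑ i ∈ s.support,
        monomial (s - Finsupp.single i 1 + Finsupp.single (up i) 1) (r * (s i : ℂ)) := by
  classical
  rw [D_eq D hD, mkDerivation_monomial, Finsupp.sum, Finset.smul_sum]
  refine Finset.sum_congr rfl fun i hi => ?_
  rw [smul_eq_mul, X, monomial_mul, mul_one, smul_monomial, smul_eq_mul]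

open Classical in
lemma coeff_D (q : MvPolynomial (I × ℕ) ℂ) (m : (I × ℕ) →₀ ℕ) :
    coeff m (D q) =
      ∑ s ∈ q.support, ∑ i ∈ s.support,
        (if s - Finsupp.single i 1 + Finsupp.single (up i) 1 = m
          then coeff s q * (s i : ℂ) else 0) := by
  classical
  conv_lhs => rw [q.as_sum, map_sum, coeff_sum]
  refine Finset.sum_congr rfl fun s hs => ?_
  rw [D_monomial D hD, coeff_sum]
  refine Finset.sum_congr rfl fun i hi => ?_
  simp only [coeff_monomial]

/-- if every level appearing in `D q` is at most `N`, then `q` only involves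
variables of level `< N`. -/
lemma levels (q : MvPolynomial (I × ℕ) ℂ) (N : ℕ)
    (hq : ∀ j ∈ (D q).vars, j.2 ≤ N) :
    ∀ s ∈ q.support, ∀ j : I × ℕ, N ≤ j.2 → s j = 0 := by
  classical
  by_contra hcon
  push_neg at hcon
  obtain ⟨s₀, hs₀, j₀, hNj₀, hj₀⟩ := hcon
  have hj₀v : j₀ ∈ q.vars := (mem_vars j₀).2 ⟨s₀, hs₀, Finsupp.mem_support_iff.2 hj₀⟩
  have hvne : q.vars.Nonempty := ⟨j₀, hj₀v⟩
  -- maximal level L in q.vars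
  set L : ℕ := q.vars.sup Prod.snd with hL
  have hlev : ∀ j ∈ q.vars, j.2 ≤ L := fun j hj => Finset.le_sup hj
  have hNL : N ≤ L := le_trans hNj₀ (hlev j₀ hj₀v)
  -- a witness variable of maximal level
  obtain ⟨jm, hjmv, hjm⟩ : ∃ j ∈ q.vars, j.2 = L := by
    obtain ⟨j, hj, hj2⟩ := Finset.exists_mem_eq_sup q.vars hvne Prod.snd
    exact ⟨j, hj, hj2.symm⟩
  obtain ⟨sm, hsm, hjmsm⟩ := (mem_vars jm).1 hjmv
  have hsmjm : sm jm ≠ 0 := Finsupp.mem_support_iff.1 hjmsm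
  -- the target monomial
  set mm : (I × ℕ) →₀ ℕ := sm - Finsupp.single jm 1 + Finsupp.single (up jm) 1 with hmm
  -- any s in the support of q vanishes above level L
  have hbound : ∀ s ∈ q.support, ∀ j : I × ℕ, L < j.2 → s j = 0 := by
    intro s hs j hLj
    by_contra hne
    have : j ∈ q.vars := (mem_vars j).2 ⟨s, hs, Finsupp.mem_support_iff.2 hne⟩
    exact absurd (hlev j this) (not_le.2 hLj)
  have hupjm : (up jm).2 = L + 1 := by simp [up, hjm]
  have hmm_up : mm (up jm) = 1 := by
    have h1 : sm (up jm) = 0 := hbound sm hsm (up jm) (by omega)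
    have h2 : jm ≠ up jm := (up_ne jm).symm
    rw [hmm, Finsupp.add_apply, Finsupp.tsub_apply, h1, Finsupp.single_eq_same,
      Finsupp.single_eq_of_ne' h2]
    omega
  -- compute the coefficient of mm in D q
  have hcoeff : coeff mm (D q) = coeff sm q * (sm jm : ℂ) := by
    rw [coeff_D D hD]
    rw [Finset.sum_eq_single sm]
    · rw [Finset.sum_eq_single jm]
      · rw [if_pos rfl]
      · intro i hi hine
        rw [if_neg]
        intro heq
        -- evaluate at (up jm)
        have hv := congrArg (fun f : (I × ℕ) →₀ ℕ => f (up jm)) heq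
        simp only [Finsupp.add_apply, Finsupp.tsub_apply] at hv
        have hsmu : sm (up jm) = 0 := hbound sm hsm (up jm) (by omega)
        have hiL : i.2 ≤ L := hlev i ((mem_vars i).2 ⟨sm, hsm, hi⟩)
        have hi_ne : i ≠ up jm := by
          intro h; rw [h, hupjm] at hiL; omega
        have hupi_ne : up i ≠ up jm := fun h => hine (up_inj h)
        rw [hmm_up, hsmu, Finsupp.single_eq_of_ne' hupi_ne] at hv
        omega
      · intro h; exact absurd hjmsm h
    · intro s hs hsne
      apply Finset.sum_eq_zero
      intro i hi
      rw [if_neg]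
      intro heq
      -- first: i = jm
      have hv := congrArg (fun f : (I × ℕ) →₀ ℕ => f (up jm)) heq
      simp only [Finsupp.add_apply, Finsupp.tsub_apply] at hv
      have hsu : s (up jm) = 0 := hbound s hs (up jm) (by omega)
      have hiL : i.2 ≤ L := hlev i ((mem_vars i).2 ⟨s, hs, hi⟩)
      have hi_ne : i ≠ up jm := by
        intro h; rw [h] at hiL; rw [hupjm] at hiL; omega
      rw [hmm_up] at hv
      by_cases hupi : up i = up jm
      · -- then i = jm, and s = sm follows, contradiction
        have hijm : i = jm := up_inj hupi
        apply hsne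
        have hsi : s jm ≠ 0 := by
          rw [← hijm]; exact Finsupp.mem_support_iff.1 hi
        ext a
        have hva := congrArg (fun f : (I × ℕ) →₀ ℕ => f a) heq
        rw [hmm, hijm] at hva
        simp only [Finsupp.add_apply, Finsupp.tsub_apply] at hva
        by_cases ha : a = jm
        · rw [ha] at hva ⊢
          have e1 : (Finsupp.single jm (1:ℕ)) jm = 1 := Finsupp.single_eq_same
          have e2 : (Finsupp.single (up jm) (1:ℕ)) jm = 0 :=
            Finsupp.single_eq_of_ne' (up_ne jm)
          rw [e1, e2] at hva
          have h2 : sm jm ≠ 0 := hsmjm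
          omega
        · have e1 : (Finsupp.single jm (1:ℕ)) a = 0 :=
            Finsupp.single_eq_of_ne' (fun h => ha h.symm)
          rw [e1] at hva
          omega
      · rw [hsu, Finsupp.single_eq_of_ne' hupi] at hv
        omega
    · intro h; exact absurd hsm h
  have hcne : coeff mm (D q) ≠ 0 := by
    rw [hcoeff]
    exact mul_ne_zero (mem_support_iff.1 hsm) (Nat.cast_ne_zero.2 hsmjm)
  have hmmv : up jm ∈ (D q).vars :=
    (mem_vars (up jm)).2 ⟨mm, mem_support_iff.2 hcne, Finsupp.mem_support_iff.2 (by omega)⟩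
  have := hq (up jm) hmmv
  omega

end Stmt4Aux

/-- Lemma 4.12, case of even generators: if `∫ F G = ∫ F G'` for all `F` (i.e.
`F·G − F·G'` is a total derivative for every `F`), then `G = G'`. -/
theorem stmt_4 {I : Type*}
    (D : Derivation ℂ (MvPolynomial (I × ℕ) ℂ) (MvPolynomial (I × ℕ) ℂ))
    (hD : ∀ (i : I) (n : ℕ), D (X (i, n)) = X (i, n + 1))
    (G G' : MvPolynomial (I × ℕ) ℂ)
    (hGG' : ∀ F : MvPolynomial (I × ℕ) ℂ, F * G - F * G' ∈ Set.range ⇑D) :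
    G = G' := by
  classical
  by_contra hne
  set H := G - G' with hH
  have hHne : H ≠ 0 := sub_ne_zero_of_ne hne
  have hran : ∀ F : MvPolynomial (I × ℕ) ℂ, F * H ∈ Set.range ⇑D := by
    intro F
    have := hGG' F
    rwa [← mul_sub] at this
  obtain ⟨μ, hμ⟩ : H.support.Nonempty := support_nonempty.2 hHne
  cases isEmpty_or_nonempty I with
  | inl h =>
    -- no variables: D is zero on constants
    obtain ⟨q, hq⟩ := hran 1
    obtain ⟨a, ha⟩ := MvPolynomial.C_surjective (I × ℕ) q
    rw [← ha, ← MvPolynomial.algebraMap_eq, Derivation.map_algebraMap] at hq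
    rw [one_mul] at hq
    exact hHne hq.symm
  | inr h =>
    obtain ⟨i₀⟩ := h
    set M : ℕ := H.vars.sup Prod.snd + 1 with hM
    have hHlev : ∀ j ∈ H.vars, j.2 ≤ M := fun j hj => by
      have := Finset.le_sup (f := Prod.snd) hj
      omega
    set F : MvPolynomial (I × ℕ) ℂ := monomial (Finsupp.single (i₀, M) 2) 1 with hF
    obtain ⟨q, hq⟩ := hran F
    have hDqlev : ∀ j ∈ (D q).vars, j.2 ≤ M := by
      intro j hj
      rw [hq] at hj
      have := vars_mul F H hj
      rcases Finset.mem_union.1 this with h1 | h2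
      · rw [hF, vars_monomial one_ne_zero,
          Finsupp.support_single_ne_zero _ (by norm_num : (2:ℕ) ≠ 0)] at h1
        simp at h1
        rw [h1]
      · exact hHlev j h2
    have hqsupp : ∀ s ∈ q.support, s (i₀, M) = 0 := fun s hs =>
      Stmt4Aux.levels D hD q M hDqlev s hs (i₀, M) le_rfl
    -- the contradiction coefficient
    set m₀ : (I × ℕ) →₀ ℕ := Finsupp.single (i₀, M) 2 + μ with hm₀
    have hc1 : coeff m₀ (D q) = coeff μ H := by
      rw [hq, hF, hm₀, coeff_monomial_mul, one_mul]
    have hc2 : coeff m₀ (D q) = 0 := by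
      rw [Stmt4Aux.coeff_D D hD]
      apply Finset.sum_eq_zero
      intro s hs
      apply Finset.sum_eq_zero
      intro i hi
      rw [if_neg]
      intro heq
      have hv := congrArg (fun f : (I × ℕ) →₀ ℕ => f (i₀, M)) heq
      simp only [Finsupp.add_apply, Finsupp.tsub_apply, hm₀] at hv
      have hs0 : s (i₀, M) = 0 := hqsupp s hs
      have hb : (Finsupp.single (Stmt4Aux.up i) (1:ℕ)) (i₀, M) ≤ 1 := by
        rw [Finsupp.single_apply]; split <;> omega
      have hb2 : (Finsupp.single ((i₀, M) : I × ℕ) (2:ℕ)) (i₀, M) = 2 :=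
        Finsupp.single_eq_same
      rw [hs0, hb2] at hv
      omega
    rw [hc1] at hc2
    exact mem_support_iff.1 hμ hc2
end

section
/- If G ∈ V satisfies v_j^{(n)} · G ∈ ∂V for all (j,n) ∈ J × ℕ, then G = 0. Equivalently: if ∫ v_j^{(n)} G = 0 for every odd variable v_j^{(n)}, then G = 0. (Lemma 4.12, the case of odd generators.) -/
/-!
Contraction `x ↦ d⌋x` with a linear functional `d` is an odd derivation of the exterior algebra, and
the total derivative satisfies `d⌋∂x = ∂(d⌋x) + (d ∘ shift)⌋x`. For the coordinate functionals
`c_n := b_{j,n}^*` this says that `c_n⌋` commutes with `∂` up to `c_{n-1}⌋` (nothing for `n = 0`).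

Suppose `c_n⌋G = 0` for all `n ≥ N` (true for large `N`, since `G` involves finitely many variables)
and write `v_j^{(N)} G = ∂H`. Contracting with `c_{n+1}` for `n ≥ N` gives `c_n⌋H = -∂(c_{n+1}⌋H)`,
so, descending from large `n`, `c_n⌋H = 0` for all `n ≥ N`; contracting with `c_N` then gives
`G = c_{N-1}⌋H`. Hence `G = 0` if `N = 0`, and otherwise `c_{N-1}⌋G = c_{N-1}⌋c_{N-1}⌋H = 0`,
so `N` can be lowered by one.
-/

open CliffordAlgebra

namespace CliffordAlgebra

variable {R M : Type*} [CommRing R] [AddCommGroup M] [Module R M] {Q : QuadraticForm R M}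

theorem contractLeft_mul (d : Module.Dual R M) (x y : CliffordAlgebra Q) :
    contractLeft d (x * y) = contractLeft d x * y + involute x * contractLeft d y := by
  induction x using CliffordAlgebra.induction generalizing y with
  | algebraMap r =>
    rw [← Algebra.smul_def, map_smul, contractLeft_algebraMap, AlgHom.commutes, zero_mul,
      zero_add, ← Algebra.smul_def]
  | ι m =>
    rw [contractLeft_ι_mul, contractLeft_ι, involute_ι, ← Algebra.smul_def, neg_mul,
      sub_eq_add_neg]
  | mul a b ha hb =>
    rw [mul_assoc, ha (b * y), hb y, ha b, map_mul]
    noncomm_ring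
  | add a b ha hb =>
    rw [add_mul, map_add, ha y, hb y, map_add, map_add, add_mul, add_mul]
    abel

section Leibniz

variable {D : CliffordAlgebra Q →ₗ[R] CliffordAlgebra Q}
  (hD : ∀ x y, D (x * y) = D x * y + x * D y)
include hD

theorem map_one_of_leibniz : D 1 = 0 := by
  simpa using hD 1 1

theorem map_algebraMap_of_leibniz (r : R) : D (algebraMap R _ r) = 0 := by
  rw [Algebra.algebraMap_eq_smul_one, map_smul, map_one_of_leibniz hD, smul_zero]

variable {f : M →ₗ[R] M} (hDι : ∀ m, D (ι Q m) = ι Q (f m))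
include hDι

theorem map_involute_of_leibniz (x : CliffordAlgebra Q) : D (involute x) = involute (D x) := by
  induction x using CliffordAlgebra.induction with
  | algebraMap r => rw [AlgHom.commutes, map_algebraMap_of_leibniz hD, map_zero]
  | ι m => rw [involute_ι, map_neg, hDι, involute_ι]
  | mul a b ha hb => rw [map_mul, hD, ha, hb, hD, map_add, map_mul, map_mul]
  | add a b ha hb => simp only [map_add, ha, hb]

theorem contractLeft_map_of_leibniz (d : Module.Dual R M) (x : CliffordAlgebra Q) :
    contractLeft d (D x) = D (contractLeft d x) + contractLeft (d ∘ₗ f) x := by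
  induction x using CliffordAlgebra.induction with
  | algebraMap r =>
    simp only [map_algebraMap_of_leibniz hD, contractLeft_algebraMap, map_zero, add_zero]
  | ι m =>
    rw [hDι, contractLeft_ι, contractLeft_ι, contractLeft_ι, map_algebraMap_of_leibniz hD,
      zero_add, LinearMap.comp_apply]
  | mul a b ha hb =>
    rw [hD, map_add, contractLeft_mul, contractLeft_mul, ha, hb, contractLeft_mul, map_add, hD,
      hD, map_involute_of_leibniz hD hDι, contractLeft_mul, add_mul, mul_add]
    abel
  | add a b ha hb =>
    simp only [map_add, ha, hb]
    abel

end Leibniz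

end CliffordAlgebra

namespace ExteriorAlgebra

open Finsupp

variable {R J : Type*} [CommRing R]

theorem eventually_contractLeft_lapply_eq_zero (j : J) (x : ExteriorAlgebra R ((J × ℕ) →₀ R)) :
    ∀ᶠ n in Filter.atTop, contractLeft (lapply (j, n)) x = 0 := by
  induction x using CliffordAlgebra.induction with
  | algebraMap r => exact .of_forall fun _ => contractLeft_algebraMap _ _ _
  | ι m =>
    have hfin : {n | m (j, n) ≠ 0}.Finite :=
      m.hasFiniteSupport.preimage (Prod.mk_right_injective j).injOn
    rw [← Nat.cofinite_eq_atTop]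
    refine (Filter.eventually_cofinite.mpr hfin).mono fun n hn => ?_
    rw [contractLeft_ι, lapply_apply, hn, map_zero]
  | mul a b ha hb =>
    filter_upwards [ha, hb] with n ha hb
    rw [contractLeft_mul, ha, hb, zero_mul, mul_zero, add_zero]
  | add a b ha hb =>
    filter_upwards [ha, hb] with n ha hb
    rw [map_add, ha, hb, add_zero]

section Shift

variable {shift : ((J × ℕ) →₀ R) →ₗ[R] ((J × ℕ) →₀ R)}
  (hshift : ∀ (j : J) (n : ℕ), shift (single (j, n) 1) = single (j, n + 1) 1)
include hshift

theorem lapply_zero_comp_shift (j : J) : lapply (j, 0) ∘ₗ shift = 0 :=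
  lhom_ext' fun p => LinearMap.ext_ring <| by simp [hshift]

theorem lapply_succ_comp_shift (j : J) (n : ℕ) :
    lapply (j, n + 1) ∘ₗ shift = lapply (j, n) := by
  classical
  exact lhom_ext' fun p => LinearMap.ext_ring <| by simp [hshift, single_apply, Prod.ext_iff]

variable {D : ExteriorAlgebra R ((J × ℕ) →₀ R) →ₗ[R] ExteriorAlgebra R ((J × ℕ) →₀ R)}
  (hD : ∀ x y, D (x * y) = D x * y + x * D y) (hDι : ∀ w, D (ι R w) = ι R (shift w))
include hD hDι

theorem eq_contractLeft_of_map_eq_ι_mul {j : J} {N : ℕ} {G H : ExteriorAlgebra R ((J × ℕ) →₀ R)}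
    (hH : D H = ι R (single (j, N) 1) * G)
    (hG : ∀ n, N ≤ n → contractLeft (lapply (j, n)) G = 0) :
    G = contractLeft (lapply (j, N) ∘ₗ shift) H := by
  have hDH_self : contractLeft (lapply (j, N)) (D H) = G := by
    rw [hH, contractLeft_ι_mul, hG N le_rfl, mul_zero, sub_zero, lapply_apply, single_eq_same,
      one_smul]
  have hDH_succ : ∀ n, N ≤ n → contractLeft (lapply (j, n + 1)) (D H) = 0 := by
    intro n hn
    rw [hH, contractLeft_ι_mul, hG (n + 1) (by omega), mul_zero, sub_zero, lapply_apply,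
      single_eq_of_ne (by simp; omega), zero_smul]
  have hstep : ∀ n, N ≤ n →
      contractLeft (lapply (j, n)) H = -D (contractLeft (lapply (j, n + 1)) H) := by
    intro n hn
    have h := contractLeft_map_of_leibniz hD hDι (lapply (j, n + 1)) H
    rw [hDH_succ n hn, lapply_succ_comp_shift hshift] at h
    exact eq_neg_of_add_eq_zero_right h.symm
  obtain ⟨M, hM⟩ := Filter.eventually_atTop.mp (eventually_contractLeft_lapply_eq_zero j H)
  have hH_vanish : ∀ k n, N ≤ n → M ≤ n + k → contractLeft (lapply (j, n)) H = 0 := by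
    intro k
    induction k with
    | zero => exact fun n _ hn => hM n hn
    | succ k ih =>
      intro n hn hnk
      rw [hstep n hn, ih (n + 1) (by omega) (by omega), map_zero, neg_zero]
  have h := contractLeft_map_of_leibniz hD hDι (lapply (j, N)) H
  rwa [hDH_self, hH_vanish M N le_rfl (by omega), map_zero, zero_add] at h

end Shift

end ExteriorAlgebra

open ExteriorAlgebra Finsupp

/-- Lemma 4.12, case of odd generators.  In the exterior algebra
`V = ExteriorAlgebra ℂ ((J × ℕ) →₀ ℂ)` of differential polynomials in odd variables
`v_j^{(n)} = ι (single (j,n) 1)`, with total derivative `D` (the unique ℂ-linear odd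
Leibniz map with `D ι(w) = ι(shift w)`): if `v_j^{(n)} · G` is a total derivative for
every odd variable `v_j^{(n)}`, then `G = 0`. -/
theorem stmt_6 {J : Type*} [Nonempty J]
    (shift : ((J × ℕ) →₀ ℂ) →ₗ[ℂ] ((J × ℕ) →₀ ℂ))
    (hshift : ∀ (j : J) (n : ℕ),
      shift (Finsupp.single (j, n) (1 : ℂ)) = Finsupp.single (j, n + 1) (1 : ℂ))
    (D : ExteriorAlgebra ℂ ((J × ℕ) →₀ ℂ) →ₗ[ℂ] ExteriorAlgebra ℂ ((J × ℕ) →₀ ℂ))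
    (hDmul : ∀ x y : ExteriorAlgebra ℂ ((J × ℕ) →₀ ℂ), D (x * y) = D x * y + x * D y)
    (hDι : ∀ w : (J × ℕ) →₀ ℂ,
      D (ExteriorAlgebra.ι ℂ w) = ExteriorAlgebra.ι ℂ (shift w))
    (G : ExteriorAlgebra ℂ ((J × ℕ) →₀ ℂ))
    (hG : ∀ (j : J) (n : ℕ),
      ExteriorAlgebra.ι ℂ (Finsupp.single (j, n) (1 : ℂ)) * G ∈ Set.range ⇑D) :
    G = 0 := by
  obtain ⟨j⟩ := ‹Nonempty J›
  obtain ⟨N, hN⟩ := Filter.eventually_atTop.mp (eventually_contractLeft_lapply_eq_zero j G)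
  induction N with
  | zero =>
    obtain ⟨H, hH⟩ := hG j 0
    rw [eq_contractLeft_of_map_eq_ι_mul hshift hDmul hDι hH hN, lapply_zero_comp_shift hshift,
      map_zero, LinearMap.zero_apply]
  | succ N ih =>
    obtain ⟨H, hH⟩ := hG j (N + 1)
    have hGN : contractLeft (lapply (j, N)) G = 0 := by
      rw [eq_contractLeft_of_map_eq_ι_mul hshift hDmul hDι hH hN, lapply_succ_comp_shift hshift]
      exact contractLeft_contractLeft _ _
    exact ih fun n hn => (eq_or_lt_of_le hn).elim (· ▸ hGN) (hN n)
end

section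
/- Let V ⊆ m^⊥ be a subspace such that m^⊥ is the internal direct sum of (ad f)(n) and V. Let (v_i)_{i ∈ ι} be a basis of m^⊥ (ι a finite index set) and J ⊆ ι a subset such that (v_i)_{i ∈ J} is a basis of V and (v_i)_{i ∈ ι∖J} is a basis of (ad f)(n). Let (v^i)_{i ∈ ι} be a basis of p dual to (v_i) with respect to B, i.e. B(v_i, v^j) = δ_{ij} for all i, j ∈ ι. Then (v^i)_{i ∈ J} is a basis of the centralizer g^f := ker(ad f) = {x ∈ L : [f,x] = 0}. (Lemma 2.15, in the purely even case.) -/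
/-!
`ad f` lowers the degree by 2 and `B` pairs `L_j` only with `L_{-j}`, so `B` pairs the part of
degree `≤ -1` nondegenerately with `n`. If `[f, x] = 0`, write `x = a + b` with `a ∈ p`,
`b ∈ m`: then `[f, b] = -[f, a]` has degree both `≥ 0` and `≤ -1`, hence is orthogonal to `n` and
vanishes, so `b = 0` by injectivity of `ad f` on `n`. For `x ∈ p`, invariance gives
`B([f, u], x) = -B(u, [f, x])`, so `[f, x] = 0` iff `x ⊥ [f, n]`. Thus
`g^f = p ∩ [f, n]^⊥`, and since the coefficient of `v^i` in `x ∈ p` is `B(v_i, x)`, this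
subspace is spanned by the `v^i` with `i ∈ J`.
-/

open LieAlgebra Submodule

section Grading

variable {K L : Type*} [Field K] [LieRing L] [LieAlgebra K L]
  {Lg : ℤ → Submodule K L} {h : L}

theorem eq_eigenspace_ad_of_iSup_eq_top [CharZero K]
    (hLg : ∀ j : ℤ, ∀ x ∈ Lg j, ⁅h, x⁆ = (j : K) • x)
    (htop : ⨆ j, Lg j = ⊤) (j : ℤ) :
    Lg j = Module.End.eigenspace (ad K L h) (j : K) := by
  have hle : Lg ≤ fun j : ℤ => Module.End.eigenspace (ad K L h) (j : K) := fun j x hx =>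
    Module.End.mem_eigenspace_iff.mpr (hLg j x hx)
  have hindep := (Module.End.eigenspaces_iSupIndep (ad K L h)).comp
    (Int.cast_injective (α := K))
  exact congrFun ((hindep.le_iff_eq_of_iSup_eq_top htop).mp hle) j

theorem lie_mem_of_lie_eq_intCast_smul [CharZero K]
    (hLg : ∀ j : ℤ, ∀ x ∈ Lg j, ⁅h, x⁆ = (j : K) • x)
    (htop : ⨆ j, Lg j = ⊤) {a j : ℤ} {y x : L} (hy : ⁅h, y⁆ = (a : K) • y) (hx : x ∈ Lg j) :
    ⁅y, x⁆ ∈ Lg (a + j) := by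
  rw [eq_eigenspace_ad_of_iSup_eq_top hLg htop, Module.End.mem_eigenspace_iff, ad_apply,
    leibniz_lie, hy, hLg j x hx, smul_lie, lie_smul]
  push_cast
  module

theorem lie_mem_iSup_of_lie_eq_intCast_smul [CharZero K]
    (hLg : ∀ j : ℤ, ∀ x ∈ Lg j, ⁅h, x⁆ = (j : K) • x)
    (htop : ⨆ j, Lg j = ⊤) {P Q : ℤ → Prop} {a : ℤ} (hPQ : ∀ j, P j → Q (a + j)) {y x : L}
    (hy : ⁅h, y⁆ = (a : K) • y) (hx : x ∈ ⨆ j : {j : ℤ // P j}, Lg j) :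
    ⁅y, x⁆ ∈ ⨆ j : {j : ℤ // Q j}, Lg j := by
  refine iSup_induction _ (motive := fun x => ⁅y, x⁆ ∈ ⨆ j : {j : ℤ // Q j}, Lg j) hx
    (fun j x hx => ?_) (by simp) fun x x' hx hx' => by rw [lie_add]; exact add_mem hx hx'
  exact le_iSup (fun j : {j : ℤ // Q j} => Lg j) ⟨a + j, hPQ j j.2⟩
    (lie_mem_of_lie_eq_intCast_smul hLg htop hy hx)

theorem iSup_subtype_sup_iSup_subtype_eq_top (htop : ⨆ j, Lg j = ⊤) {P Q : ℤ → Prop}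
    (hPQ : ∀ j, P j ∨ Q j) :
    (⨆ j : {j : ℤ // P j}, Lg j) ⊔ (⨆ j : {j : ℤ // Q j}, Lg j) = ⊤ := by
  refine top_unique (htop ▸ iSup_le fun j => ?_)
  rcases hPQ j with hj | hj
  · exact le_sup_of_le_left (le_iSup (fun j : {j : ℤ // P j} => Lg j) ⟨j, hj⟩)
  · exact le_sup_of_le_right (le_iSup (fun j : {j : ℤ // Q j} => Lg j) ⟨j, hj⟩)

variable {B : L →ₗ[K] L →ₗ[K] K}

theorem apply_lie_eq_neg_apply_lie (hBinv : ∀ x y z : L, B ⁅x, y⁆ z = B x ⁅y, z⁆) (y u x : L) :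
    B ⁅y, u⁆ x = -B u ⁅y, x⁆ := by
  rw [← lie_skew, map_neg, LinearMap.neg_apply, hBinv]

theorem apply_eq_zero_of_add_ne_zero [CharZero K]
    (hBinv : ∀ x y z : L, B ⁅x, y⁆ z = B x ⁅y, z⁆)
    (hLg : ∀ j : ℤ, ∀ x ∈ Lg j, ⁅h, x⁆ = (j : K) • x) {j k : ℤ} (hjk : j + k ≠ 0) {x y : L}
    (hx : x ∈ Lg j) (hy : y ∈ Lg k) : B x y = 0 := by
  have hsum : ((j + k : ℤ) : K) * B x y = 0 := by
    have := apply_lie_eq_neg_apply_lie hBinv h x y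
    rw [hLg j x hx, hLg k y hy, map_smul, map_smul, LinearMap.smul_apply] at this
    push_cast
    linear_combination this
  exact (mul_eq_zero.mp hsum).resolve_left (Int.cast_ne_zero.mpr hjk)

theorem apply_eq_zero_of_mem_iSup_of_mem_iSup [CharZero K]
    (hBinv : ∀ x y z : L, B ⁅x, y⁆ z = B x ⁅y, z⁆)
    (hLg : ∀ j : ℤ, ∀ x ∈ Lg j, ⁅h, x⁆ = (j : K) • x) {P Q : ℤ → Prop}
    (hPQ : ∀ j k, P j → Q k → j + k ≠ 0) {x y : L} (hx : x ∈ ⨆ j : {j : ℤ // P j}, Lg j)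
    (hy : y ∈ ⨆ k : {k : ℤ // Q k}, Lg k) : B x y = 0 := by
  refine iSup_induction _ (motive := fun x => B x y = 0) hx (fun j x hx => ?_) (by simp)
    fun x x' hx hx' => by rw [map_add, LinearMap.add_apply, hx, hx', add_zero]
  refine iSup_induction _ (motive := fun y => B x y = 0) hy (fun k y hy => ?_) (by simp)
    fun y y' hy hy' => by rw [map_add, hy, hy', add_zero]
  exact apply_eq_zero_of_add_ne_zero hBinv hLg (hPQ j k j.2 k.2) hx hy

end Grading

theorem mem_orthogonalBilin_span_iff {R M : Type*} [CommSemiring R] [AddCommMonoid M]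
    [Module R M] {B : M →ₗ[R] M →ₗ[R] R} {s : Set M} {y : M} :
    y ∈ (span R s).orthogonalBilin B ↔ ∀ x ∈ s, B x y = 0 := by
  refine ⟨fun hy x hx => hy x (subset_span hx), fun hy => ?_⟩
  rw [mem_orthogonalBilin_iff]
  exact fun x hx => (span_le (p := LinearMap.ker (B.flip y))).mpr hy hx

theorem span_image_eq_inf_orthogonalBilin {R M ι : Type*} [CommSemiring R] [AddCommMonoid M]
    [Module R M] [DecidableEq ι] (B : M →ₗ[R] M →ₗ[R] R) {v vd : ι → M}
    (hdual : ∀ i j, B (v i) (vd j) = if i = j then 1 else 0) (J : Set ι) :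
    span R (vd '' J) = span R (Set.range vd) ⊓ (span R (v '' Jᶜ)).orthogonalBilin B := by
  have hcoef : ∀ k (l : ι →₀ R), B (v k) (Finsupp.linearCombination R vd l) = l k := by
    intro k l
    simp [Finsupp.linearCombination_apply, map_finsuppSum, hdual]
  apply le_antisymm
  · rw [span_le]
    rintro _ ⟨i, hi, rfl⟩
    refine ⟨subset_span ⟨i, rfl⟩, mem_orthogonalBilin_span_iff.mpr ?_⟩
    rintro _ ⟨k, hk, rfl⟩
    rw [hdual, if_neg (ne_of_mem_of_not_mem hi hk).symm]
  · rintro _ ⟨hx, hxo⟩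
    obtain ⟨l, rfl⟩ := (Finsupp.range_linearCombination (R := R) (v := vd)).symm ▸ hx
    refine (Finsupp.mem_span_image_iff_linearCombination R).mpr ⟨l, ?_, rfl⟩
    refine (Finsupp.mem_supported' R l).mpr fun k hk => ?_
    rw [← hcoef]
    exact mem_orthogonalBilin_span_iff.mp hxo _ ⟨k, hk, rfl⟩

section Centralizer

variable {K L : Type*} [Field K] [CharZero K] [LieRing L] [LieAlgebra K L]
  {B : L →ₗ[K] L →ₗ[K] K} {Lg : ℤ → Submodule K L} {h f : L}

theorem eq_zero_of_mem_iSup_le_neg_one_of_forall_apply_eq_zero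
    (hBsymm : ∀ x y : L, B x y = B y x) (hBinv : ∀ x y z : L, B ⁅x, y⁆ z = B x ⁅y, z⁆)
    (hBnd : ∀ x : L, (∀ y : L, B x y = 0) → x = 0)
    (hLg : ∀ j : ℤ, ∀ x ∈ Lg j, ⁅h, x⁆ = (j : K) • x) (htop : ⨆ j, Lg j = ⊤) {w : L}
    (hw : w ∈ ⨆ j : {j : ℤ // j ≤ -1}, Lg j)
    (horth : ∀ u ∈ ⨆ j : {j : ℤ // 1 ≤ j}, Lg j, B u w = 0) : w = 0 := by
  refine hBnd w fun y => ?_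
  have hy : y ∈ (⨆ j : {j : ℤ // 1 ≤ j}, Lg j) ⊔ ⨆ j : {j : ℤ // j ≤ 0}, Lg j := by
    rw [iSup_subtype_sup_iSup_subtype_eq_top htop fun j => by omega]
    exact mem_top
  obtain ⟨a, ha, b, hb, rfl⟩ := mem_sup.mp hy
  rw [map_add, hBsymm, horth a ha, zero_add]
  exact apply_eq_zero_of_mem_iSup_of_mem_iSup hBinv hLg (fun j k hj hk => by omega) hw hb

theorem mem_iSup_le_one_of_lie_eq_zero
    (hBsymm : ∀ x y : L, B x y = B y x) (hBinv : ∀ x y z : L, B ⁅x, y⁆ z = B x ⁅y, z⁆)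
    (hBnd : ∀ x : L, (∀ y : L, B x y = 0) → x = 0) (hhf : ⁅h, f⁆ = (-2 : K) • f)
    (hLg : ∀ j : ℤ, ∀ x ∈ Lg j, ⁅h, x⁆ = (j : K) • x) (htop : ⨆ j, Lg j = ⊤)
    (hinj : ∀ x ∈ ⨆ j : {j : ℤ // 1 ≤ j}, Lg j, ⁅f, x⁆ = 0 → x = 0) {x : L}
    (hx : ⁅f, x⁆ = 0) : x ∈ ⨆ j : {j : ℤ // j ≤ 1}, Lg j := by
  have hhf' : ⁅h, f⁆ = ((-2 : ℤ) : K) • f := by rw [hhf]; norm_num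
  have hsplit : x ∈ (⨆ j : {j : ℤ // j ≤ 1}, Lg j) ⊔ ⨆ j : {j : ℤ // 2 ≤ j}, Lg j := by
    rw [iSup_subtype_sup_iSup_subtype_eq_top htop fun j => by omega]
    exact mem_top
  obtain ⟨a, ha, b, hb, rfl⟩ := mem_sup.mp hsplit
  have hfb : ⁅f, b⁆ = -⁅f, a⁆ := eq_neg_of_add_eq_zero_right (by rwa [← lie_add])
  have hfb_low : ⁅f, b⁆ ∈ ⨆ j : {j : ℤ // j ≤ -1}, Lg j :=
    hfb ▸ neg_mem (lie_mem_iSup_of_lie_eq_intCast_smul hLg htop (fun j hj => by omega) hhf' ha)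
  have hfb_high : ⁅f, b⁆ ∈ ⨆ j : {j : ℤ // 0 ≤ j}, Lg j :=
    lie_mem_iSup_of_lie_eq_intCast_smul hLg htop (fun j hj => by omega) hhf' hb
  have hfb_zero : ⁅f, b⁆ = 0 :=
    eq_zero_of_mem_iSup_le_neg_one_of_forall_apply_eq_zero hBsymm hBinv hBnd hLg htop hfb_low
      fun u hu => apply_eq_zero_of_mem_iSup_of_mem_iSup hBinv hLg (fun j k hj hk => by omega)
        hu hfb_high
  have hb_pos : b ∈ ⨆ j : {j : ℤ // 1 ≤ j}, Lg j :=
    (iSup_mono' fun j => ⟨⟨j, by have := j.2; omega⟩, le_rfl⟩ :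
      (⨆ j : {j : ℤ // 2 ≤ j}, Lg j) ≤ ⨆ j : {j : ℤ // 1 ≤ j}, Lg j) hb
  rw [hinj b hb_pos hfb_zero, add_zero]
  exact ha

theorem ker_ad_eq_inf_orthogonalBilin
    (hBsymm : ∀ x y : L, B x y = B y x) (hBinv : ∀ x y z : L, B ⁅x, y⁆ z = B x ⁅y, z⁆)
    (hBnd : ∀ x : L, (∀ y : L, B x y = 0) → x = 0) (hhf : ⁅h, f⁆ = (-2 : K) • f)
    (hLg : ∀ j : ℤ, ∀ x ∈ Lg j, ⁅h, x⁆ = (j : K) • x) (htop : ⨆ j, Lg j = ⊤)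
    (hinj : ∀ x ∈ ⨆ j : {j : ℤ // 1 ≤ j}, Lg j, ⁅f, x⁆ = 0 → x = 0) :
    LinearMap.ker (ad K L f) = (⨆ j : {j : ℤ // j ≤ 1}, Lg j) ⊓
      (map (ad K L f) (⨆ j : {j : ℤ // 1 ≤ j}, Lg j)).orthogonalBilin B := by
  ext x
  simp only [LinearMap.mem_ker, ad_apply, mem_inf, mem_orthogonalBilin_iff, mem_map,
    forall_exists_index, and_imp, forall_apply_eq_imp_iff₂]
  refine ⟨fun hx => ⟨mem_iSup_le_one_of_lie_eq_zero hBsymm hBinv hBnd hhf hLg htop hinj hx,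
    fun u _ => by rw [apply_lie_eq_neg_apply_lie hBinv, hx, map_zero, neg_zero]⟩,
    fun ⟨hx, horth⟩ => ?_⟩
  have hhf' : ⁅h, f⁆ = ((-2 : ℤ) : K) • f := by rw [hhf]; norm_num
  refine eq_zero_of_mem_iSup_le_neg_one_of_forall_apply_eq_zero hBsymm hBinv hBnd hLg htop
    (lie_mem_iSup_of_lie_eq_intCast_smul hLg htop (fun j hj => by omega) hhf' hx) fun u hu => ?_
  rw [← neg_eq_zero, ← apply_lie_eq_neg_apply_lie hBinv]
  exact horth u hu

end Centralizer

theorem stmt_8_general {L : Type*} [LieRing L] [LieAlgebra ℂ L]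
    (B : L →ₗ[ℂ] L →ₗ[ℂ] ℂ)
    (hBsymm : ∀ x y : L, B x y = B y x)
    (hBinv : ∀ x y z : L, B ⁅x, y⁆ z = B x ⁅y, z⁆)
    (hBnd : ∀ x : L, (∀ y : L, B x y = 0) → x = 0)
    (h f : L)
    (hhf : ⁅h, f⁆ = (-2 : ℂ) • f)
    (Lg : ℤ → Submodule ℂ L)
    (hLg : ∀ j : ℤ, ∀ x ∈ Lg j, ⁅h, x⁆ = (j : ℂ) • x)
    (hinternal : DirectSum.IsInternal Lg)
    (n p : Submodule ℂ L)
    (hn : n = ⨆ j : {j : ℤ // 1 ≤ j}, Lg j)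
    (hp : p = ⨆ j : {j : ℤ // j ≤ 1}, Lg j)
    (hinj : ∀ x ∈ n, ⁅f, x⁆ = 0 → x = 0)
    {ι : Type*} [DecidableEq ι]
    (v vd : ι → L) (J : Set ι)
    (hvJc_span : Submodule.span ℂ (v '' Jᶜ) = Submodule.map (LieAlgebra.ad ℂ L f) n)
    (hvd_li : LinearIndependent ℂ vd)
    (hvd_span : Submodule.span ℂ (Set.range vd) = p)
    (hdual : ∀ i j : ι, B (v i) (vd j) = if i = j then 1 else 0) :
    LinearIndependent ℂ (fun i : J => vd i) ∧
      Submodule.span ℂ (vd '' J) = LinearMap.ker (LieAlgebra.ad ℂ L f) := by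
  subst hn hp
  refine ⟨hvd_li.comp _ Subtype.val_injective, ?_⟩
  rw [ker_ad_eq_inf_orthogonalBilin hBsymm hBinv hBnd hhf hLg hinternal.submodule_iSup_eq_top
    hinj, ← hvd_span, ← hvJc_span]
  exact span_image_eq_inf_orthogonalBilin B hdual J

/-- Lemma 2.15 (purely even case).  With the Dynkin-grading setup of Setup 2.1:
if `(v_i)_{i∈ι}` is a basis of `m^⊥` such that `(v_i)_{i∈J}` is a basis of a
complement `V` of `(ad f)(n)` in `m^⊥` and `(v_i)_{i∉J}` is a basis of `(ad f)(n)`,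
and `(vᵈ_i)` is the dual basis of `p` with respect to `B`, then `(vᵈ_i)_{i∈J}` is a
basis of the centralizer `g^f = ker (ad f)`. -/
theorem stmt_8 {L : Type*} [LieRing L] [LieAlgebra ℂ L] [FiniteDimensional ℂ L]
    (B : L →ₗ[ℂ] L →ₗ[ℂ] ℂ)
    (hBsymm : ∀ x y : L, B x y = B y x)
    (hBinv : ∀ x y z : L, B ⁅x, y⁆ z = B x ⁅y, z⁆)
    (hBnd : ∀ x : L, (∀ y : L, B x y = 0) → x = 0)
    (e h f : L)
    (hhe : ⁅h, e⁆ = (2 : ℂ) • e) (hhf : ⁅h, f⁆ = (-2 : ℂ) • f) (hef : ⁅e, f⁆ = h)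
    (Lg : ℤ → Submodule ℂ L)
    (hLg : ∀ j : ℤ, ∀ x ∈ Lg j, ⁅h, x⁆ = (j : ℂ) • x)
    (hinternal : DirectSum.IsInternal Lg)
    (n m p mperp : Submodule ℂ L)
    (hn : n = ⨆ j : {j : ℤ // 1 ≤ j}, Lg j)
    (hm : m = ⨆ j : {j : ℤ // 2 ≤ j}, Lg j)
    (hp : p = ⨆ j : {j : ℤ // j ≤ 1}, Lg j)
    (hmperp : ∀ x : L, x ∈ mperp ↔ ∀ y ∈ m, B x y = 0)
    (hinj : ∀ x ∈ n, ⁅f, x⁆ = 0 → x = 0)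
    (hsurj : ∀ y ∈ (⨆ j : {j : ℤ // j ≤ -1}, Lg j), ∃ x ∈ p, ⁅f, x⁆ = y)
    (V : Submodule ℂ L)
    (hsum : Submodule.map (LieAlgebra.ad ℂ L f) n ⊔ V = mperp)
    (hdisj : Submodule.map (LieAlgebra.ad ℂ L f) n ⊓ V = ⊥)
    {ι : Type*} [Fintype ι] [DecidableEq ι]
    (v vd : ι → L) (J : Set ι)
    (hv_li : LinearIndependent ℂ v)
    (hv_span : Submodule.span ℂ (Set.range v) = mperp)
    (hvJ : ∀ i ∈ J, v i ∈ V)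
    (hvJ_span : Submodule.span ℂ (v '' J) = V)
    (hvJc : ∀ i ∉ J, v i ∈ Submodule.map (LieAlgebra.ad ℂ L f) n)
    (hvJc_span : Submodule.span ℂ (v '' Jᶜ) = Submodule.map (LieAlgebra.ad ℂ L f) n)
    (hvd_mem : ∀ i : ι, vd i ∈ p)
    (hvd_li : LinearIndependent ℂ vd)
    (hvd_span : Submodule.span ℂ (Set.range vd) = p)
    (hdual : ∀ i j : ι, B (v i) (vd j) = if i = j then 1 else 0) :
    LinearIndependent ℂ (fun i : J => vd i) ∧
      Submodule.span ℂ (vd '' J) = LinearMap.ker (LieAlgebra.ad ℂ L f) :=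
  stmt_8_general B hBsymm hBinv hBnd h f hhf Lg hLg hinternal n p hn hp hinj v vd J hvJc_span hvd_li
    hvd_span hdual
end

section
/- Let P be a commutative ℂ-algebra with a ℂ-linear derivation ∂ : P → P, and let (β_n)_{n∈ℕ} be a family of ℂ-bilinear maps β_n : P × P → P such that for all a, b ∈ P, β_n(a,b) = 0 for all but finitely many n (the coefficients of a λ-bracket {a_λ b} = ∑_n β_n(a,b) λ^n). Assume: (sesquilinearity) β_0(∂a, b) = 0, β_{n+1}(∂a, b) = −β_n(a,b), β_0(a, ∂b) = ∂(β_0(a,b)), and β_{n+1}(a, ∂b) = β_n(a,b) + ∂(β_{n+1}(a,b)) for all n ∈ ℕ and a, b ∈ P; (skew-symmetry at λ = 0) β_0(a,b) = −∑_{n≥0} (−1)^n ∂^n(β_n(b,a)) for all a, b; (Jacobi at λ = μ = 0) β_0(a, β_0(b,c)) = β_0(β_0(a,b), c) + β_0(b, β_0(a,c)) for all a, b, c. Then the bracket [a + ∂P, b + ∂P] := β_0(a,b) + ∂P on the quotient ℂ-vector space P/∂P, where ∂P is the range of ∂, is well defined (independent of the chosen representatives) and makes P/∂P a Lie algebra over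 ℂ. -/
/-!
Sesquilinearity makes `β₀(∂a, b)` vanish and `β₀(a, ∂b)` a total derivative, so `β₀` descends to
`P/∂P`. In the skew-symmetry formula every term with `n ≥ 1` is a total derivative, so modulo `∂P`
it reduces to `β₀(a, b) = -β₀(b, a)`; the Jacobi identity descends verbatim.
-/

open LinearMap

namespace LinearMap

variable {R M : Type*} [CommRing R] [AddCommGroup M] [Module R M] (f : M →ₗ[R] M)

theorem sum_smul_iterate_succ_mem_range (c : ℕ → R) (x : ℕ → M) (N : ℕ) :
    ∑ n ∈ Finset.range N, c n • f^[n + 1] (x n) ∈ range f :=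
  Submodule.sum_mem _ fun n _ ↦ Submodule.smul_mem _ _ <| by
    rw [Function.iterate_succ_apply']
    exact mem_range_self f _

theorem add_mem_range_of_eq_neg_sum_iterate (x : ℕ → M) (y : M) (N : ℕ)
    (h : y = -∑ n ∈ Finset.range (N + 1), (-1 : R) ^ n • f^[n] (x n)) :
    y + x 0 ∈ range f := by
  rw [Finset.sum_range_succ', pow_zero, one_smul, Function.iterate_zero_apply] at h
  rw [h, neg_add, neg_add_cancel_right]
  exact neg_mem (f.sum_smul_iterate_succ_mem_range _ _ N)

variable (B : M →ₗ[R] M →ₗ[R] M)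

theorem range_le_ker_compr₂_mkQ (h : ∀ a b, B (f a) b = 0) :
    range f ≤ (B.compr₂ (range f).mkQ).ker := by
  rintro _ ⟨a, rfl⟩
  ext b
  simp [h]

theorem range_le_ker_flip_compr₂_mkQ (h : ∀ a b, B a (f b) = f (B a b)) :
    range f ≤ (B.compr₂ (range f).mkQ).flip.ker := by
  rintro _ ⟨b, rfl⟩
  ext a
  simp only [compr₂_apply, flip_apply, h, Submodule.mkQ_apply, zero_apply,
    Submodule.Quotient.mk_eq_zero]
  exact mem_range_self f _

end LinearMap

theorem stmt_9_general {P : Type*} [CommRing P] [Algebra ℂ P]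
    (D : Derivation ℂ P P)
    (β : ℕ → P →ₗ[ℂ] P →ₗ[ℂ] P)
    (hfin : ∀ a b : P, ∃ N : ℕ, ∀ n : ℕ, N ≤ n → β n a b = 0)
    (hses1 : ∀ a b : P, β 0 (D a) b = 0)
    (hses3 : ∀ a b : P, β 0 a (D b) = D (β 0 a b))
    (hskew : ∀ (a b : P) (N : ℕ), (∀ n : ℕ, N ≤ n → β n b a = 0) →
      β 0 a b = - ∑ n ∈ Finset.range N, ((-1 : ℂ) ^ n) • (⇑D)^[n] (β n b a))
    (hjac : ∀ a b c : P, β 0 a (β 0 b c) = β 0 (β 0 a b) c + β 0 b (β 0 a c)) :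
    ∃ br : (P ⧸ LinearMap.range D.toLinearMap) →ₗ[ℂ]
        (P ⧸ LinearMap.range D.toLinearMap) →ₗ[ℂ]
        (P ⧸ LinearMap.range D.toLinearMap),
      (∀ a b : P, br (Submodule.Quotient.mk a) (Submodule.Quotient.mk b)
          = Submodule.Quotient.mk (β 0 a b)) ∧
      (∀ x y, br x y = - br y x) ∧
      (∀ x y z, br x (br y z) = br (br x y) z + br y (br x z)) := by
  refine ⟨((β 0).compr₂ (range D.toLinearMap).mkQ).liftQ₂ _ _
    (D.toLinearMap.range_le_ker_compr₂_mkQ (β 0) hses1)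
    (D.toLinearMap.range_le_ker_flip_compr₂_mkQ (β 0) hses3), fun a b ↦ rfl, ?_, ?_⟩
  · simp only [Submodule.Quotient.forall, liftQ₂_mk, compr₂_apply, Submodule.mkQ_apply]
    intro a b
    rw [eq_neg_iff_add_eq_zero, ← Submodule.Quotient.mk_add, Submodule.Quotient.mk_eq_zero]
    obtain ⟨N, hN⟩ := hfin b a
    exact D.toLinearMap.add_mem_range_of_eq_neg_sum_iterate (fun n ↦ β n b a) _ N
      (hskew a b (N + 1) fun n hn ↦ hN n (by omega))
  · simp only [Submodule.Quotient.forall, liftQ₂_mk, compr₂_apply, Submodule.mkQ_apply]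
    intro a b c
    rw [← Submodule.Quotient.mk_add, hjac]

/-- Proposition of Section 2.1, purely even case: for a Poisson vertex algebra
(Lie conformal algebra) `P` with λ-bracket `{a_λ b} = ∑ₙ βₙ(a,b) λⁿ`, the bracket
`[a + ∂P, b + ∂P] = β₀(a,b) + ∂P` on `P/∂P` is well defined and makes `P/∂P`
a Lie algebra. -/
theorem stmt_9 {P : Type*} [CommRing P] [Algebra ℂ P]
    (D : Derivation ℂ P P)
    (β : ℕ → P →ₗ[ℂ] P →ₗ[ℂ] P)
    (hfin : ∀ a b : P, ∃ N : ℕ, ∀ n : ℕ, N ≤ n → β n a b = 0)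
    (hses1 : ∀ a b : P, β 0 (D a) b = 0)
    (hses2 : ∀ (n : ℕ) (a b : P), β (n + 1) (D a) b = - β n a b)
    (hses3 : ∀ a b : P, β 0 a (D b) = D (β 0 a b))
    (hses4 : ∀ (n : ℕ) (a b : P), β (n + 1) a (D b) = β n a b + D (β (n + 1) a b))
    (hskew : ∀ (a b : P) (N : ℕ), (∀ n : ℕ, N ≤ n → β n b a = 0) →
      β 0 a b = - ∑ n ∈ Finset.range N, ((-1 : ℂ) ^ n) • (⇑D)^[n] (β n b a))
    (hjac : ∀ a b c : P, β 0 a (β 0 b c) = β 0 (β 0 a b) c + β 0 b (β 0 a c)) :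
    ∃ br : (P ⧸ LinearMap.range D.toLinearMap) →ₗ[ℂ]
        (P ⧸ LinearMap.range D.toLinearMap) →ₗ[ℂ]
        (P ⧸ LinearMap.range D.toLinearMap),
      (∀ a b : P, br (Submodule.Quotient.mk a) (Submodule.Quotient.mk b)
          = Submodule.Quotient.mk (β 0 a b)) ∧
      (∀ x y, br x y = - br y x) ∧
      (∀ x y z, br x (br y z) = br (br x y) z + br y (br x z)) :=
  stmt_9_general D β hfin hses1 hses3 hskew hjac
end
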